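/- Let ℓ ≥ 3 be odd, ξ = exp(2πi/ℓ). In the module V_{μ₁,μ₂} with the actions given, F₁^ℓ = 0 where F₁ is the operator by which f₁ acts, i.e., f₁^ℓ acts as zero on V_{μ₁,μ₂}. -/

import Mathlib

/-- `ξ^x := exp(2πix/ℓ)` -/
noncomputable def qexp (ℓ : ℕ) (x : ℂ) : ℂ :=
  Complex.exp (2 * Real.pi * Complex.I * x / ℓ)

/-- valid basis indices `(ρ,σ,p)` of the module `V_{μ₁,μ₂}` -/
def valid (ℓ : ℕ) (ρ σ p : ℤ) : Prop :=
  (ρ = 0 ∨ ρ = 1) ∧ (σ = 0 ∨ σ = 1) ∧ 0 ≤ p ∧ p ≤ (ℓ : ℤ) - 1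

/-- the basis vector `w_{ρ,σ,p}`, with the convention that out-of-range
indices give the zero vector -/
noncomputable def w (ℓ : ℕ) (ρ σ p : ℤ) : (ℤ × ℤ × ℤ) →₀ ℂ :=
  open Classical in
  if valid ℓ ρ σ p then Finsupp.single (ρ, σ, p) 1 else 0

/-
On each chain `w_{ρ,σ,0}, …, w_{ρ,σ,ℓ-1}` the operator `f₁` is a weighted shift with weights
`ξ^{σ-p}`, so `f₁^ℓ` pushes every basis vector off the end of its chain, except for what leaks
through the jump `w_{1,0,p} ↦ -w_{0,1,p}`. The `(0,1)`-weights are `ξ` times the `(1,0)`-weights,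
so the `ℓ` paths through the jump reach `w_{0,1,p+ℓ-1}` with coefficients `ξ^j` times a common
factor, and these cancel since `1 + ξ + ⋯ + ξ^{ℓ-1} = 0`.
-/

open Finset

section CoupledShifts

variable {R M : Type*} [CommRing R] [AddCommGroup M] [Module R M]

theorem Module.End.pow_succ_apply_of_coupled_shifts (F : Module.End R M) {u v : ℕ → M}
    {a : ℕ → R} {ξ : R} (hu : ∀ q, F (u q) = a q • u (q + 1) - v q)
    (hv : ∀ q, F (v q) = (ξ * a q) • v (q + 1)) (n : ℕ) :
    (F ^ (n + 1)) (u 0) = (∏ i ∈ range (n + 1), a i) • u (n + 1)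
      - ((∑ j ∈ range (n + 1), ξ ^ j) * ∏ i ∈ range n, a i) • v n := by
  induction n with
  | zero => simp [hu]
  | succ n ih =>
    rw [pow_succ', Module.End.mul_apply, ih, map_sub, map_smul, map_smul, hu, hv,
      prod_range_succ _ (n + 1), prod_range_succ _ n, geom_sum_succ (n := n + 1)]
    module

theorem Module.End.pow_apply_eq_zero_of_coupled_shifts [IsDomain R] (F : Module.End R M)
    {u v : ℕ → M} {a : ℕ → R} {ξ : R} (hu : ∀ q, F (u q) = a q • u (q + 1) - v q)
    (hv : ∀ q, F (v q) = (ξ * a q) • v (q + 1)) {ℓ : ℕ} (hξ : IsPrimitiveRoot ξ ℓ)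
    (hℓ : 1 < ℓ) (huℓ : u ℓ = 0) : (F ^ ℓ) (u 0) = 0 := by
  obtain ⟨n, rfl⟩ : ∃ n, ℓ = n + 1 := ⟨ℓ - 1, by omega⟩
  rw [F.pow_succ_apply_of_coupled_shifts hu hv, huℓ, hξ.geom_sum_eq_zero hℓ]
  simp

end CoupledShifts

lemma qexp_add (ℓ : ℕ) (x y : ℂ) : qexp ℓ (x + y) = qexp ℓ x * qexp ℓ y := by
  simp only [qexp, ← Complex.exp_add]
  ring_nf

@[simp]
lemma qexp_zero (ℓ : ℕ) : qexp ℓ 0 = 1 := by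
  simp [qexp]

lemma isPrimitiveRoot_qexp_one {ℓ : ℕ} (hℓ : ℓ ≠ 0) : IsPrimitiveRoot (qexp ℓ 1) ℓ := by
  simpa [qexp, mul_div_assoc] using Complex.isPrimitiveRoot_exp ℓ hℓ

lemma w_eq_zero_of_le {ℓ : ℕ} {ρ σ p : ℤ} (h : (ℓ : ℤ) ≤ p) : w ℓ ρ σ p = 0 := by
  rw [w, if_neg]
  rintro ⟨-, -, -, h'⟩
  omega

section F₁Action

variable {ℓ : ℕ} {F₁ : Module.End ℂ ((ℤ × ℤ × ℤ) →₀ ℂ)}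

lemma apply_w_of_nonneg
    (hF₁ : ∀ ρ σ p : ℤ, valid ℓ ρ σ p →
      F₁ (w ℓ ρ σ p) = qexp ℓ ((σ : ℂ) - p) • w ℓ ρ σ (p + 1)
        - ((ρ : ℂ) * (1 - (σ : ℂ)) * qexp ℓ (-(σ : ℂ))) • w ℓ (ρ - 1) (σ + 1) p)
    {ρ σ p : ℤ} (hρ : ρ = 0 ∨ ρ = 1) (hσ : σ = 0 ∨ σ = 1) (hp : 0 ≤ p) :
    F₁ (w ℓ ρ σ p) = qexp ℓ ((σ : ℂ) - p) • w ℓ ρ σ (p + 1)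
      - ((ρ : ℂ) * (1 - (σ : ℂ)) * qexp ℓ (-(σ : ℂ))) • w ℓ (ρ - 1) (σ + 1) p := by
  rcases le_or_gt p (ℓ - 1) with h | h
  · exact hF₁ ρ σ p ⟨hρ, hσ, hp, h⟩
  · simp [w_eq_zero_of_le (show (ℓ : ℤ) ≤ p by omega),
      w_eq_zero_of_le (show (ℓ : ℤ) ≤ p + 1 by omega)]

lemma apply_smul_w_jump_of_nonneg
    (hF₁ : ∀ ρ σ p : ℤ, valid ℓ ρ σ p →
      F₁ (w ℓ ρ σ p) = qexp ℓ ((σ : ℂ) - p) • w ℓ ρ σ (p + 1)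
        - ((ρ : ℂ) * (1 - (σ : ℂ)) * qexp ℓ (-(σ : ℂ))) • w ℓ (ρ - 1) (σ + 1) p)
    {ρ σ p : ℤ} (hρ : ρ = 0 ∨ ρ = 1) (hσ : σ = 0 ∨ σ = 1) (hp : 0 ≤ p) :
    F₁ (((ρ : ℂ) * (1 - (σ : ℂ)) * qexp ℓ (-(σ : ℂ))) • w ℓ (ρ - 1) (σ + 1) p)
      = (qexp ℓ 1 * qexp ℓ ((σ : ℂ) - p))
        • ((ρ : ℂ) * (1 - (σ : ℂ)) * qexp ℓ (-(σ : ℂ))) • w ℓ (ρ - 1) (σ + 1) (p + 1) := by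
  by_cases h₁₀ : ρ = 1 ∧ σ = 0
  · obtain ⟨rfl, rfl⟩ := h₁₀
    simp only [Int.cast_one, Int.cast_zero, sub_zero, mul_one, neg_zero, qexp_zero, sub_self,
      zero_add, one_smul, zero_sub]
    rw [apply_w_of_nonneg hF₁ (by simp) (by simp) hp]
    simp [sub_eq_add_neg, qexp_add]
  · have hc : (ρ : ℂ) * (1 - (σ : ℂ)) * qexp ℓ (-(σ : ℂ)) = 0 := by
      rcases hρ with rfl | rfl <;> rcases hσ with rfl | rfl <;> simp_all
    simp [hc]

end F₁Action

theorem stmt15_general (ℓ : ℕ) (h3 : 3 ≤ ℓ)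
    (F₁ : Module.End ℂ ((ℤ × ℤ × ℤ) →₀ ℂ))
    (hF₁ : ∀ ρ σ p : ℤ, valid ℓ ρ σ p →
      F₁ (w ℓ ρ σ p) = qexp ℓ ((σ : ℂ) - p) • w ℓ ρ σ (p + 1)
        - ((ρ : ℂ) * (1 - (σ : ℂ)) * qexp ℓ (-(σ : ℂ))) • w ℓ (ρ - 1) (σ + 1) p) :
    ∀ ρ σ p : ℤ, valid ℓ ρ σ p → (F₁ ^ ℓ) (w ℓ ρ σ p) = 0 := by
  rintro ρ σ p ⟨hρ, hσ, hp, -⟩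
  set c : ℂ := (ρ : ℂ) * (1 - (σ : ℂ)) * qexp ℓ (-(σ : ℂ))
  have hu : ∀ q : ℕ, F₁ (w ℓ ρ σ (p + q)) = qexp ℓ ((σ : ℂ) - ((p + q : ℤ) : ℂ))
      • w ℓ ρ σ (p + (q + 1 : ℕ)) - c • w ℓ (ρ - 1) (σ + 1) (p + q) := fun q => by
    rw [apply_w_of_nonneg hF₁ hρ hσ (by omega), Nat.cast_succ, add_assoc]
  have hv : ∀ q : ℕ, F₁ (c • w ℓ (ρ - 1) (σ + 1) (p + q))
      = (qexp ℓ 1 * qexp ℓ ((σ : ℂ) - ((p + q : ℤ) : ℂ)))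
        • c • w ℓ (ρ - 1) (σ + 1) (p + (q + 1 : ℕ)) := fun q => by
    rw [apply_smul_w_jump_of_nonneg hF₁ hρ hσ (by omega), Nat.cast_succ, add_assoc]
  simpa using Module.End.pow_apply_eq_zero_of_coupled_shifts F₁
    (u := fun q => w ℓ ρ σ (p + q)) hu hv (isPrimitiveRoot_qexp_one (by omega)) (by omega)
    (w_eq_zero_of_le (by omega))

theorem stmt15 (ℓ : ℕ) (h3 : 3 ≤ ℓ) (hodd : Odd ℓ)
    (F₁ : Module.End ℂ ((ℤ × ℤ × ℤ) →₀ ℂ))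
    (hF₁ : ∀ ρ σ p : ℤ, valid ℓ ρ σ p →
      F₁ (w ℓ ρ σ p) = qexp ℓ ((σ : ℂ) - p) • w ℓ ρ σ (p + 1)
        - ((ρ : ℂ) * (1 - (σ : ℂ)) * qexp ℓ (-(σ : ℂ))) • w ℓ (ρ - 1) (σ + 1) p) :
    ∀ ρ σ p : ℤ, valid ℓ ρ σ p → (F₁ ^ ℓ) (w ℓ ρ σ p) = 0 :=
  stmt15_general ℓ h3 F₁ hF₁
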